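/- Suppose G = G₁ ∨ G₂ is a one-point union of edge-labeled graphs at vertex v, with generalized contractions φ_i: G → G_i collapsing the other factor to v. Then Spl_R(G,α) decomposes as the internal direct sum Spl_R(G,α) = φ₁*(Spl_R(G₁,α₁)) ⊕ φ₂*(Spl_R(G₂,α₂;v)), where φ_i* denotes vertex expansion. -/

import Mathlib

/-- An edge-labeled graph: a finite (multi)graph together with an assignment
of an ideal of `R` to each edge. -/
structure ELGraph (R : Type) [CommRing R] where
  V : Type
  E : Type
  [fV : Fintype V]
  [fE : Fintype E]
  [dV : DecidableEq V]
  ends : E → V × V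
  lab : E → Ideal R

attribute [instance] ELGraph.fV ELGraph.fE ELGraph.dV

variable {R : Type} [CommRing R]

/-- `p` is a generalized spline on `(G, α)`. -/
def ELGraph.IsSpline (G : ELGraph R) (p : G.V → R) : Prop :=
  ∀ e : G.E, p (G.ends e).1 - p (G.ends e).2 ∈ G.lab e

/-- The module of generalized splines on `(G, α)`, as a submodule of `⊕_{v} R`. -/
def splSub (G : ELGraph R) : Submodule R (G.V → R) where
  carrier := {p | G.IsSpline p}
  add_mem' := by
    intro p q hp hq e
    simpa [ELGraph.IsSpline, add_sub_add_comm] using Ideal.add_mem _ (hp e) (hq e)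
  zero_mem' := by intro e; simp
  smul_mem' := by
    intro c p hp e
    simpa [ELGraph.IsSpline, mul_sub] using Submodule.smul_mem _ c (hp e)

/-- The natural inclusion of the vertices of `G₂` into the one-point union
`G₁ ∨_v G₂`, sending `v₂` to (the image of) `v₁`. -/
def wedgeInc (G₁ G₂ : ELGraph R) (v₁ : G₁.V) (v₂ : G₂.V) (w : G₂.V) :
    G₁.V ⊕ {w : G₂.V // w ≠ v₂} :=
  if h : w = v₂ then Sum.inl v₁ else Sum.inr ⟨w, h⟩

/-- The one-point union `G₁ ∨_v G₂` of edge-labeled graphs, identifying `v₁ ∈ G₁`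
with `v₂ ∈ G₂`: vertex set `V_{G₁} ⊔ (V_{G₂} ∖ {v₂})`, edge set `E_{G₁} ⊔ E_{G₂}`,
labels restricting to the original labels on each factor. -/
def wedge (G₁ G₂ : ELGraph R) (v₁ : G₁.V) (v₂ : G₂.V) : ELGraph R where
  V := G₁.V ⊕ {w : G₂.V // w ≠ v₂}
  E := G₁.E ⊕ G₂.E
  ends := fun e =>
    match e with
    | .inl e => (Sum.inl (G₁.ends e).1, Sum.inl (G₁.ends e).2)
    | .inr e => (wedgeInc G₁ G₂ v₁ v₂ (G₂.ends e).1, wedgeInc G₁ G₂ v₁ v₂ (G₂.ends e).2)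
  lab := Sum.elim G₁.lab G₂.lab

/-- Vertex expansion along the contraction `φ₁ : G₁ ∨_v G₂ → G₁` collapsing `G₂` to `v`. -/
def wedgeExpand₁ (G₁ G₂ : ELGraph R) (v₁ : G₁.V) (v₂ : G₂.V) (q : G₁.V → R) :
    (wedge G₁ G₂ v₁ v₂).V → R :=
  Sum.elim q (fun _ => q v₁)

/-- Vertex expansion along the contraction `φ₂ : G₁ ∨_v G₂ → G₂` collapsing `G₁` to `v`. -/
def wedgeExpand₂ (G₁ G₂ : ELGraph R) (v₁ : G₁.V) (v₂ : G₂.V) (q : G₂.V → R) :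
    (wedge G₁ G₂ v₁ v₂).V → R :=
  Sum.elim (fun _ => q v₂) (fun w => q w.1)

/-! The spline condition on `G₁ ∨_v G₂` is the spline condition on each factor, and a function
on the vertices of `G₁ ∨_v G₂` is determined by its restrictions to `G₁` (through `Sum.inl`) and to
`G₂` (through `wedgeInc`). Hence `p` splits as `φ₁*(p|_{G₁}) + φ₂*(p|_{G₂} - p(v))`, and evaluating
any decomposition on both factors recovers these two components. -/

theorem ELGraph.IsSpline.sub_const {G : ELGraph R} {p : G.V → R} (hp : G.IsSpline p) (c : R) :
    G.IsSpline fun w => p w - c :=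
  fun e => by simpa only [sub_sub_sub_cancel_right] using hp e

section Wedge

variable {G₁ G₂ : ELGraph R} {v₁ : G₁.V} {v₂ : G₂.V}

@[simp]
theorem wedgeInc_self : wedgeInc G₁ G₂ v₁ v₂ v₂ = Sum.inl v₁ := dif_pos rfl

theorem wedgeInc_of_ne {w : G₂.V} (h : w ≠ v₂) : wedgeInc G₁ G₂ v₁ v₂ w = Sum.inr ⟨w, h⟩ :=
  dif_neg h

theorem wedge.funext {f g : (wedge G₁ G₂ v₁ v₂).V → R} (h₁ : ∀ w, f (Sum.inl w) = g (Sum.inl w))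
    (h₂ : ∀ w, f (wedgeInc G₁ G₂ v₁ v₂ w) = g (wedgeInc G₁ G₂ v₁ v₂ w)) : f = g := by
  funext x
  rcases x with w | ⟨w, hw⟩
  · exact h₁ w
  · simpa only [wedgeInc_of_ne hw] using h₂ w

theorem wedge.isSpline_comp_inl {p : (wedge G₁ G₂ v₁ v₂).V → R} (hp : (wedge G₁ G₂ v₁ v₂).IsSpline p) :
    G₁.IsSpline (p ∘ Sum.inl) :=
  fun e => hp (Sum.inl e)

theorem wedge.isSpline_comp_wedgeInc {p : (wedge G₁ G₂ v₁ v₂).V → R}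
    (hp : (wedge G₁ G₂ v₁ v₂).IsSpline p) : G₂.IsSpline (p ∘ wedgeInc G₁ G₂ v₁ v₂) :=
  fun e => hp (Sum.inr e)

@[simp]
theorem wedgeExpand_add_apply_inl (q₁ : G₁.V → R) (q₂ : G₂.V → R) (w : G₁.V) :
    (wedgeExpand₁ G₁ G₂ v₁ v₂ q₁ + wedgeExpand₂ G₁ G₂ v₁ v₂ q₂) (Sum.inl w) = q₁ w + q₂ v₂ :=
  rfl

@[simp]
theorem wedgeExpand_add_apply_wedgeInc (q₁ : G₁.V → R) (q₂ : G₂.V → R) (w : G₂.V) :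
    (wedgeExpand₁ G₁ G₂ v₁ v₂ q₁ + wedgeExpand₂ G₁ G₂ v₁ v₂ q₂) (wedgeInc G₁ G₂ v₁ v₂ w) =
      q₁ v₁ + q₂ w := by
  unfold wedgeInc
  split_ifs with h
  · subst h; rfl
  · rfl

end Wedge

/-- for a one-point union `G = G₁ ∨_v G₂`,
`Spl_R(G,α) = φ₁*(Spl_R(G₁,α₁)) ⊕ φ₂*(Spl_R(G₂,α₂;v))` as an internal direct sum:
every spline on `G` is uniquely the sum of the vertex expansion of a spline on `G₁`
and the vertex expansion of a spline on `G₂` vanishing at `v`. -/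
theorem wedge_internal_direct_sum (G₁ G₂ : ELGraph R) (v₁ : G₁.V) (v₂ : G₂.V)
    (p : (wedge G₁ G₂ v₁ v₂).V → R) (hp : (wedge G₁ G₂ v₁ v₂).IsSpline p) :
    ∃! qq : (G₁.V → R) × (G₂.V → R),
      G₁.IsSpline qq.1 ∧ G₂.IsSpline qq.2 ∧ qq.2 v₂ = 0 ∧
      p = wedgeExpand₁ G₁ G₂ v₁ v₂ qq.1 + wedgeExpand₂ G₁ G₂ v₁ v₂ qq.2 := by
  let q₂ : G₂.V → R := fun w => p (wedgeInc G₁ G₂ v₁ v₂ w) - p (Sum.inl v₁)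
  refine ⟨(fun w => p (Sum.inl w), q₂),
    ⟨wedge.isSpline_comp_inl hp, (wedge.isSpline_comp_wedgeInc hp).sub_const _, by simp [q₂],
      wedge.funext (by simp [q₂]) (by simp [q₂])⟩, ?_⟩
  rintro ⟨r₁, r₂⟩ ⟨-, -, hr₂v : r₂ v₂ = 0, hsum⟩
  have hr₁ : ∀ w, p (Sum.inl w) = r₁ w := by simp [hsum, hr₂v]
  refine Prod.ext (funext fun w => (hr₁ w).symm) (funext fun w => ?_)
  simp [q₂, hsum, hr₂v]
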